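/- arXiv:2507.10335 — 6 statements merged into one kernel-verified Lean document; each statement's English description precedes it below -/
import Mathlib

section
/- (Dirichlet identity for the Fréchet 2-Laplacian.) Let OH = (V, E, w) be a symmetric weighted oriented hypergraph and take η = 0. Then for every vertex function f : V → ℝ^d, the Dirichlet energy of the Fréchet gradient satisfies ⟨∇^F f, ∇^F f⟩_F = 2 ⟨f, Δ_2^F f⟩^stnd, i.e. Σ_{e ∈ E} w(e) ‖x_out(e) − x_in(e)‖² = 2 Σ_{u ∈ V} ⟨f(u), Δ_2^F f(u)⟩. -/
open Finset

/-- A weighted oriented hypergraph on a vertex type `V`: a finite set of oriented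
hyperedges `e = (e_in, e_out)` with nonempty disjoint in- and out-sets, and a
nonnegative weight function. -/
structure OHG (V : Type*) where
  E : Finset (Finset V × Finset V)
  w : Finset V × Finset V → ℝ
  in_nonempty : ∀ e ∈ E, e.1.Nonempty
  out_nonempty : ∀ e ∈ E, e.2.Nonempty
  disj : ∀ e ∈ E, Disjoint e.1 e.2
  w_nonneg : ∀ e ∈ E, 0 ≤ w e

variable {V : Type*} [DecidableEq V] {d : ℕ}

/-- `OH` is symmetric: each hyperedge has its opposite in `E`, with the same weight. -/
def OHG.Symm (OH : OHG V) : Prop :=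
  ∀ e ∈ OH.E, (e.2, e.1) ∈ OH.E ∧ OH.w (e.2, e.1) = OH.w e

/-- Arithmetic mean (Euclidean Fréchet mean) of the values of `f` on a finite set `s`. -/
noncomputable def xmean (s : Finset V) (f : V → EuclideanSpace ℝ (Fin d)) :
    EuclideanSpace ℝ (Fin d) :=
  (s.card : ℝ)⁻¹ • ∑ u ∈ s, f u

/-- The Fréchet gradient `∇^F f(e) = √(w e) (x_out(e) - x_in(e))`. -/
noncomputable def gradF (OH : OHG V) (f : V → EuclideanSpace ℝ (Fin d))
    (e : Finset V × Finset V) : EuclideanSpace ℝ (Fin d) :=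
  Real.sqrt (OH.w e) • (xmean e.2 f - xmean e.1 f)

/-- The pairwise gradient `∇^P f(e)(u,v) = (√(w e) / (|e_in| |e_out|)) (f v - f u)`. -/
noncomputable def gradP (OH : OHG V) (f : V → EuclideanSpace ℝ (Fin d))
    (e : Finset V × Finset V) (u v : V) : EuclideanSpace ℝ (Fin d) :=
  (Real.sqrt (OH.w e) / ((e.1.card : ℝ) * (e.2.card : ℝ))) • (f v - f u)

/-- In-neighborhood `N^in(u)`: hyperedges whose in-set contains `u`. -/
def Nin (OH : OHG V) (u : V) : Finset (Finset V × Finset V) :=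
  OH.E.filter (fun e => u ∈ e.1)

/-- The Fréchet 2-Laplacian `Δ₂^F` (with normalization exponent `η ∈ {0,1}`). -/
noncomputable def lapF (OH : OHG V) (η : ℕ) (f : V → EuclideanSpace ℝ (Fin d)) (u : V) :
    EuclideanSpace ℝ (Fin d) :=
  (-(((Nin OH u).card : ℝ) ^ η)⁻¹) •
    ∑ e ∈ Nin OH u, (OH.w e / (e.1.card : ℝ)) • (xmean e.2 f - xmean e.1 f)

/-- The pairwise 2-Laplacian `Δ₂^P` (with normalization exponent `η ∈ {0,1}`). -/
noncomputable def lapP (OH : OHG V) (η : ℕ) (f : V → EuclideanSpace ℝ (Fin d)) (u : V) :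
    EuclideanSpace ℝ (Fin d) :=
  (-(((Nin OH u).card : ℝ) ^ η)⁻¹) •
    ∑ e ∈ Nin OH u, (OH.w e / ((e.1.card : ℝ) ^ 2 * (e.2.card : ℝ))) •
      ∑ u1 ∈ e.1, ∑ u2 ∈ e.2, (f u2 - f u1)

/-- The isotropic Fréchet p-Laplacian `Δ_p^{i,F}` (real powers are `Real.rpow`). -/
noncomputable def lapIF (OH : OHG V) (η : ℕ) (p : ℝ) (f : V → EuclideanSpace ℝ (Fin d))
    (u : V) : EuclideanSpace ℝ (Fin d) :=
  (-(((Nin OH u).card : ℝ) ^ η)⁻¹ *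
      (∑ e ∈ Nin OH u, OH.w e * ‖xmean e.2 f - xmean e.1 f‖ ^ 2 / (e.1.card : ℝ))
        ^ ((p - 2) / 2)) •
    ∑ e ∈ Nin OH u, (OH.w e / (e.1.card : ℝ)) • (xmean e.2 f - xmean e.1 f)

/-- The anisotropic Fréchet p-Laplacian `Δ_p^{a,F}` (real powers are `Real.rpow`). -/
noncomputable def lapAF (OH : OHG V) (η : ℕ) (p : ℝ) (f : V → EuclideanSpace ℝ (Fin d))
    (u : V) : EuclideanSpace ℝ (Fin d) :=
  (-(((Nin OH u).card : ℝ) ^ η)⁻¹) •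
    ∑ e ∈ Nin OH u,
      ((OH.w e ^ (p / 2) * ‖xmean e.2 f - xmean e.1 f‖ ^ (p - 2)) / (e.1.card : ℝ)) •
        (xmean e.2 f - xmean e.1 f)

/-- The isotropic pairwise p-Laplacian `Δ_p^{i,P}` (real powers are `Real.rpow`). -/
noncomputable def lapIP (OH : OHG V) (η : ℕ) (p : ℝ) (f : V → EuclideanSpace ℝ (Fin d))
    (u : V) : EuclideanSpace ℝ (Fin d) :=
  (-(((Nin OH u).card : ℝ) ^ η)⁻¹ *
      (∑ e ∈ Nin OH u, ∑ u1 ∈ e.1, ∑ u2 ∈ e.2,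
          OH.w e * ‖f u1 - f u2‖ ^ 2 / ((e.1.card : ℝ) ^ 2 * (e.2.card : ℝ)))
        ^ ((p - 2) / 2)) •
    ∑ e ∈ Nin OH u, (OH.w e / ((e.1.card : ℝ) ^ 2 * (e.2.card : ℝ))) •
      ∑ u1 ∈ e.1, ∑ u2 ∈ e.2, (f u2 - f u1)

/-- The anisotropic pairwise p-Laplacian `Δ_p^{a,P}` (real powers are `Real.rpow`). -/
noncomputable def lapAP (OH : OHG V) (η : ℕ) (p : ℝ) (f : V → EuclideanSpace ℝ (Fin d))
    (u : V) : EuclideanSpace ℝ (Fin d) :=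
  (-(((Nin OH u).card : ℝ) ^ η)⁻¹) •
    ∑ e ∈ Nin OH u, (OH.w e ^ (p / 2) / ((e.1.card : ℝ) ^ p * (e.2.card : ℝ) ^ (p - 1))) •
      ∑ u1 ∈ e.1, ∑ u2 ∈ e.2, ‖f u1 - f u2‖ ^ (p - 2) • (f u2 - f u1)

/-- Dirichlet identity for the Fréchet 2-Laplacian (η = 0). -/
theorem dirichlet_identity_frechet (V : Type*) [Fintype V] [DecidableEq V] [Nonempty V]
    (d : ℕ) (OH : OHG V) (hsym : OH.Symm) (f : V → EuclideanSpace ℝ (Fin d)) :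
    ∑ e ∈ OH.E, (inner ℝ (gradF OH f e) (gradF OH f e) : ℝ) =
      2 * ∑ u : V, (inner ℝ (f u) (lapF OH 0 f u) : ℝ) := by
  classical
  set D : Finset V × Finset V → EuclideanSpace ℝ (Fin d) :=
    fun e => xmean e.2 f - xmean e.1 f with hD
  have hLHS : ∑ e ∈ OH.E, (inner ℝ (gradF OH f e) (gradF OH f e) : ℝ)
      = ∑ e ∈ OH.E, OH.w e * inner ℝ (D e) (D e) := by
    refine Finset.sum_congr rfl fun e he => ?_
    simp only [gradF, real_inner_smul_left, real_inner_smul_right, ← mul_assoc,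
      Real.mul_self_sqrt (OH.w_nonneg e he), hD]
  rw [hLHS]
  have hrhs : ∀ u : V, (inner ℝ (f u) (lapF OH 0 f u) : ℝ)
      = - ∑ e ∈ Nin OH u, (OH.w e / (e.1.card : ℝ)) * inner ℝ (f u) (D e) := by
    intro u
    simp only [lapF, pow_zero, inv_one, real_inner_smul_right, inner_sum, hD,
      neg_one_mul, neg_mul, one_mul]
  have hswap : ∑ u : V, ∑ e ∈ Nin OH u, (OH.w e / (e.1.card : ℝ)) * (inner ℝ (f u) (D e) : ℝ)
      = ∑ e ∈ OH.E, ∑ u ∈ e.1, (OH.w e / (e.1.card : ℝ)) * (inner ℝ (f u) (D e) : ℝ) := by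
    calc ∑ u : V, ∑ e ∈ Nin OH u, (OH.w e / (e.1.card : ℝ)) * (inner ℝ (f u) (D e) : ℝ)
        = ∑ u : V, ∑ e ∈ OH.E,
            if u ∈ e.1 then (OH.w e / (e.1.card : ℝ)) * (inner ℝ (f u) (D e) : ℝ) else 0 := by
          refine Finset.sum_congr rfl fun u _ => ?_
          rw [Nin, Finset.sum_filter]
      _ = ∑ e ∈ OH.E, ∑ u : V,
            if u ∈ e.1 then (OH.w e / (e.1.card : ℝ)) * (inner ℝ (f u) (D e) : ℝ) else 0 :=
          Finset.sum_comm
      _ = ∑ e ∈ OH.E, ∑ u ∈ e.1, (OH.w e / (e.1.card : ℝ)) * (inner ℝ (f u) (D e) : ℝ) := by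
          refine Finset.sum_congr rfl fun e _ => ?_
          simp [Finset.sum_ite_mem]
  have hinner : ∀ e ∈ OH.E, ∑ u ∈ e.1, (OH.w e / (e.1.card : ℝ)) * (inner ℝ (f u) (D e) : ℝ)
      = OH.w e * inner ℝ (xmean e.1 f) (D e) := by
    intro e he
    have hc : (e.1.card : ℝ) ≠ 0 := by
      exact_mod_cast Finset.card_ne_zero_of_mem (OH.in_nonempty e he).choose_spec
    rw [← Finset.mul_sum, ← sum_inner]
    simp only [xmean, real_inner_smul_left]
    field_simp
  have hRHS : 2 * ∑ u : V, (inner ℝ (f u) (lapF OH 0 f u) : ℝ)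
      = -2 * ∑ e ∈ OH.E, OH.w e * inner ℝ (xmean e.1 f) (D e) := by
    simp only [hrhs, Finset.sum_neg_distrib]
    rw [hswap, Finset.sum_congr rfl hinner]
    ring
  rw [hRHS]
  have hsymm_sum : ∑ e ∈ OH.E, OH.w e * (inner ℝ (xmean e.2 f) (D e) : ℝ)
      = ∑ e ∈ OH.E, OH.w e * (inner ℝ (xmean e.1 f) (-D e) : ℝ) := by
    refine Finset.sum_nbij' (fun e => (e.2, e.1)) (fun e => (e.2, e.1))
      (fun e he => (hsym e he).1) (fun e he => (hsym e he).1)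
      (fun e _ => rfl) (fun e _ => rfl) ?_
    intro e he
    have hw := (hsym e he).2
    simp only [hD, hw]
    congr 1
    simp only [neg_sub]
  calc ∑ e ∈ OH.E, OH.w e * (inner ℝ (D e) (D e) : ℝ)
      = ∑ e ∈ OH.E, (OH.w e * inner ℝ (xmean e.2 f) (D e)
          - OH.w e * inner ℝ (xmean e.1 f) (D e)) := by
        refine Finset.sum_congr rfl fun e he => ?_
        rw [hD]
        simp only [inner_sub_left]
        ring
    _ = ∑ e ∈ OH.E, OH.w e * (inner ℝ (xmean e.2 f) (D e) : ℝ)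
          - ∑ e ∈ OH.E, OH.w e * (inner ℝ (xmean e.1 f) (D e) : ℝ) := Finset.sum_sub_distrib _ _
    _ = -2 * ∑ e ∈ OH.E, OH.w e * inner ℝ (xmean e.1 f) (D e) := by
        rw [hsymm_sum]
        simp only [inner_neg_right, mul_neg, Finset.sum_neg_distrib]
        ring
end

section
/- (Dirichlet identity for the pairwise 2-Laplacian with the semi inner product.) Let OH = (V, E, w) be a symmetric weighted oriented hypergraph and take η = 0. Then for every vertex function f : V → ℝ^d, ⟨∇^P f, ∇^P f⟩^semi = 2 ⟨f, Δ_2^P f⟩^stnd. -/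
open Finset

variable {V : Type*} [DecidableEq V] {d : ℕ}

section Aux

open RealInnerProductSpace

variable [Fintype V]

lemma sum_Nin_eq (OH : OHG V) (g : V → Finset V × Finset V → ℝ) :
    ∑ u : V, ∑ e ∈ Nin OH u, g u e = ∑ e ∈ OH.E, ∑ u ∈ e.1, g u e := by
  unfold Nin
  simp_rw [Finset.sum_filter]
  rw [Finset.sum_comm]
  refine Finset.sum_congr rfl fun e _ => ?_
  rw [Finset.sum_ite_mem, Finset.univ_inter]

omit [DecidableEq V] [Fintype V] in
lemma T_pair (e : Finset V × Finset V) (f : V → EuclideanSpace ℝ (Fin d)) :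
    (∑ u1 ∈ e.1, ∑ u2 ∈ e.2, (f u2 - f u1)) =
      (e.1.card : ℝ) • (∑ u ∈ e.2, f u) - (e.2.card : ℝ) • (∑ u ∈ e.1, f u) := by
  simp only [Finset.sum_sub_distrib, Finset.sum_const, ← Nat.cast_smul_eq_nsmul ℝ,
    ← Finset.smul_sum, Finset.smul_sum, Finset.sum_smul]

omit [DecidableEq V] [Fintype V] in
lemma T_swap (e : Finset V × Finset V) (f : V → EuclideanSpace ℝ (Fin d)) :
    (∑ u1 ∈ e.2, ∑ u2 ∈ e.1, (f u2 - f u1)) =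
      - ∑ u1 ∈ e.1, ∑ u2 ∈ e.2, (f u2 - f u1) := by
  rw [Finset.sum_comm, ← Finset.sum_neg_distrib]
  simp [← Finset.sum_neg_distrib, neg_sub]

end Aux

set_option maxHeartbeats 1000000 in
open RealInnerProductSpace in
/-- Dirichlet identity for the pairwise 2-Laplacian with the semi inner
product (η = 0). -/
theorem dirichlet_identity_pairwise (V : Type*) [Fintype V] [DecidableEq V] [Nonempty V]
    (d : ℕ) (OH : OHG V) (hsym : OH.Symm) (f : V → EuclideanSpace ℝ (Fin d)) :
    ∑ u : V, ∑ e ∈ Nin OH u, ((e.1.card : ℝ))⁻¹ *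
        (inner ℝ (∑ u1 ∈ e.1, ∑ u2 ∈ e.2, gradP OH f e u1 u2)
               (∑ u1 ∈ e.1, ∑ u2 ∈ e.2, gradP OH f e u1 u2) : ℝ) =
      2 * ∑ u : V, (inner ℝ (f u) (lapP OH 0 f u) : ℝ) := by
  classical
  set T : Finset V × Finset V → EuclideanSpace ℝ (Fin d) :=
    fun e => ∑ u1 ∈ e.1, ∑ u2 ∈ e.2, (f u2 - f u1) with hT
  set A : Finset V × Finset V → EuclideanSpace ℝ (Fin d) :=
    fun e => ∑ u ∈ e.1, f u with hA
  -- LHS as a sum over hyperedges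
  have hgrad : ∀ e : Finset V × Finset V,
      (∑ u1 ∈ e.1, ∑ u2 ∈ e.2, gradP OH f e u1 u2) =
        (Real.sqrt (OH.w e) / ((e.1.card : ℝ) * (e.2.card : ℝ))) • T e := by
    intro e
    simp only [gradP, hT, Finset.smul_sum]
  have hL : (∑ u : V, ∑ e ∈ Nin OH u, ((e.1.card : ℝ))⁻¹ *
        (inner ℝ (∑ u1 ∈ e.1, ∑ u2 ∈ e.2, gradP OH f e u1 u2)
               (∑ u1 ∈ e.1, ∑ u2 ∈ e.2, gradP OH f e u1 u2) : ℝ)) =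
      ∑ e ∈ OH.E, (OH.w e / (((e.1.card : ℝ) * (e.2.card : ℝ)) ^ 2)) *
        (inner ℝ (T e) (T e) : ℝ) := by
    rw [sum_Nin_eq]
    refine Finset.sum_congr rfl fun e he => ?_
    have ha : (e.1.card : ℝ) ≠ 0 := by
      simpa using (OH.in_nonempty e he).card_pos.ne'
    rw [Finset.sum_const, hgrad, real_inner_smul_left, real_inner_smul_right,
      nsmul_eq_mul]
    have hw : Real.sqrt (OH.w e) * Real.sqrt (OH.w e) = OH.w e :=
      Real.mul_self_sqrt (OH.w_nonneg e he)
    have hc : Real.sqrt (OH.w e) / ((e.1.card : ℝ) * (e.2.card : ℝ)) *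
        (Real.sqrt (OH.w e) / ((e.1.card : ℝ) * (e.2.card : ℝ))) =
        OH.w e / (((e.1.card : ℝ) * (e.2.card : ℝ)) ^ 2) := by
      rw [div_mul_div_comm, hw, sq]
    rw [← mul_assoc (Real.sqrt (OH.w e) / _), hc, mul_inv_cancel_left₀ ha]
  -- RHS as a sum over hyperedges
  have hR : (∑ u : V, (inner ℝ (f u) (lapP OH 0 f u) : ℝ)) =
      - ∑ e ∈ OH.E, (OH.w e / ((e.1.card : ℝ) ^ 2 * (e.2.card : ℝ))) *
        (inner ℝ (A e) (T e) : ℝ) := by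
    have h1 : ∀ u : V, (inner ℝ (f u) (lapP OH 0 f u) : ℝ) =
        - ∑ e ∈ Nin OH u, (OH.w e / ((e.1.card : ℝ) ^ 2 * (e.2.card : ℝ))) *
          (inner ℝ (f u) (T e) : ℝ) := by
      intro u
      simp only [lapP, pow_zero, inv_one, neg_smul, one_smul, inner_neg_right,
        inner_sum, real_inner_smul_right, hT]
    have h2 : ∑ u : V, ∑ e ∈ Nin OH u,
          (OH.w e / ((e.1.card : ℝ) ^ 2 * (e.2.card : ℝ))) * (inner ℝ (f u) (T e) : ℝ) =
        ∑ e ∈ OH.E, (OH.w e / ((e.1.card : ℝ) ^ 2 * (e.2.card : ℝ))) *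
          (inner ℝ (A e) (T e) : ℝ) := by
      rw [sum_Nin_eq]
      refine Finset.sum_congr rfl fun e he => ?_
      rw [← Finset.mul_sum, hA]
      rw [sum_inner]
    simp_rw [h1]
    rw [Finset.sum_neg_distrib, h2]
  rw [hL, hR]
  -- symmetrization over opposite hyperedges
  set F : Finset V × Finset V → ℝ :=
    fun e => (OH.w e / ((e.1.card : ℝ) ^ 2 * (e.2.card : ℝ))) * (inner ℝ (A e) (T e) : ℝ)
    with hF
  have hswapE : ∑ e ∈ OH.E, F e = ∑ e ∈ OH.E, F (e.2, e.1) := by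
    refine Finset.sum_nbij' (i := fun e => (e.2, e.1)) (j := fun e => (e.2, e.1))
      ?_ ?_ ?_ ?_ ?_
    · intro e he; exact (hsym e he).1
    · intro e he; exact (hsym e he).1
    · intro e he; rfl
    · intro e he; rfl
    · intro e he; rfl
  have key : 2 * (- ∑ e ∈ OH.E, F e) = ∑ e ∈ OH.E, (-(F e + F (e.2, e.1))) :=
    calc 2 * (- ∑ e ∈ OH.E, F e)
        = -((∑ e ∈ OH.E, F e) + ∑ e ∈ OH.E, F (e.2, e.1)) := by rw [← hswapE]; ring
      _ = ∑ e ∈ OH.E, (-(F e + F (e.2, e.1))) := by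
          rw [← Finset.sum_add_distrib, ← Finset.sum_neg_distrib]
  rw [key]
  refine Finset.sum_congr rfl fun e he => ?_
  have ha : ((e.1.card : ℝ)) ≠ 0 := by
    simpa using (OH.in_nonempty e he).card_pos.ne'
  have hb : ((e.2.card : ℝ)) ≠ 0 := by
    simpa using (OH.out_nonempty e he).card_pos.ne'
  have hw : OH.w (e.2, e.1) = OH.w e := (hsym e he).2
  have hTs : T (e.2, e.1) = - T e := T_swap e f
  have hAs : A (e.2, e.1) = ∑ u ∈ e.2, f u := rfl
  have hTT : (inner ℝ (T e) (T e) : ℝ) =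
      (e.1.card : ℝ) * (inner ℝ (∑ u ∈ e.2, f u) (T e) : ℝ) -
      (e.2.card : ℝ) * (inner ℝ (A e) (T e) : ℝ) := by
    nth_rewrite 1 [show T e = (e.1.card : ℝ) • (∑ u ∈ e.2, f u) - (e.2.card : ℝ) • (A e)
      from T_pair e f]
    rw [inner_sub_left, real_inner_smul_left, real_inner_smul_left]
  simp only [hF, hw, hTs, hAs, inner_neg_right]
  rw [hTT]
  set x : ℝ := (inner ℝ (A e) (T e) : ℝ) with hx
  set y : ℝ := (inner ℝ (∑ u ∈ e.2, f u) (T e) : ℝ) with hy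
  field_simp
  ring
end

section
/- Let OH = (V, E, w) be a weighted oriented hypergraph and f : V → ℝ^d a vertex function. Then the semi inner product of the pairwise gradient with itself equals the Fréchet edge inner product of the Fréchet gradient with itself: ⟨∇^P f, ∇^P f⟩^semi = ⟨∇^F f, ∇^F f⟩_F = Σ_{e ∈ E} w(e) ‖x_out(e) − x_in(e)‖². -/
open Finset

variable {V : Type*} [DecidableEq V] {d : ℕ}

/-- the semi inner product of the pairwise gradient with itself equals the
Fréchet edge inner product of the Fréchet gradient with itself, which equals
`Σ_e w(e) ‖x_out(e) − x_in(e)‖²`. -/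
theorem semi_inner_pairwise_eq_frechet_energy (V : Type*) [Fintype V] [DecidableEq V]
    [Nonempty V] (d : ℕ) (OH : OHG V) (f : V → EuclideanSpace ℝ (Fin d)) :
    (∑ u : V, ∑ e ∈ Nin OH u, ((e.1.card : ℝ))⁻¹ *
        (inner ℝ (∑ u1 ∈ e.1, ∑ u2 ∈ e.2, gradP OH f e u1 u2)
               (∑ u1 ∈ e.1, ∑ u2 ∈ e.2, gradP OH f e u1 u2) : ℝ) =
      ∑ e ∈ OH.E, (inner ℝ (gradF OH f e) (gradF OH f e) : ℝ)) ∧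
    (∑ e ∈ OH.E, (inner ℝ (gradF OH f e) (gradF OH f e) : ℝ) =
      ∑ e ∈ OH.E, OH.w e * ‖xmean e.2 f - xmean e.1 f‖ ^ 2) := by
  have hS : ∀ e ∈ OH.E,
      (∑ u1 ∈ e.1, ∑ u2 ∈ e.2, gradP OH f e u1 u2) = gradF OH f e := by
    intro e he
    have h1 : (e.1.card : ℝ) ≠ 0 := Nat.cast_ne_zero.2 (OH.in_nonempty e he).card_pos.ne'
    have h2 : (e.2.card : ℝ) ≠ 0 := Nat.cast_ne_zero.2 (OH.out_nonempty e he).card_pos.ne'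
    simp only [gradP, gradF, xmean]
    simp only [← Finset.smul_sum, Finset.sum_sub_distrib, Finset.sum_const]
    match_scalars <;> field_simp <;> ring
  constructor
  · have hswap : ∀ (g : Finset V × Finset V → ℝ),
        (∑ u : V, ∑ e ∈ Nin OH u, g e) = ∑ e ∈ OH.E, (e.1.card : ℝ) * g e := by
      intro g
      simp only [Nin, Finset.sum_filter]
      rw [Finset.sum_comm]
      refine Finset.sum_congr rfl fun e he => ?_
      rw [Finset.sum_ite_mem, Finset.univ_inter, Finset.sum_const, nsmul_eq_mul]
    rw [hswap]
    refine Finset.sum_congr rfl fun e he => ?_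
    have h1 : (e.1.card : ℝ) ≠ 0 := Nat.cast_ne_zero.2 (OH.in_nonempty e he).card_pos.ne'
    rw [hS e he]
    field_simp
  · refine Finset.sum_congr rfl fun e he => ?_
    rw [real_inner_self_eq_norm_sq, gradF, norm_smul, mul_pow, Real.norm_eq_abs,
      sq_abs, Real.sq_sqrt (OH.w_nonneg e he)]
end

section
/- Let OH = (V, E, w) be a symmetric weighted oriented hypergraph and take η = 0. Then the Fréchet 2-Laplacian is positive semidefinite with respect to the canonical vertex inner product: ⟨f, Δ_2^F f⟩^stnd ≥ 0 for every vertex function f : V → ℝ^d. -/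
open Finset

variable {V : Type*} [DecidableEq V] {d : ℕ}

/-- the Fréchet 2-Laplacian (η = 0, symmetric hypergraph) is positive
semidefinite w.r.t. the canonical vertex inner product. -/
theorem frechet_laplacian_pos_semidef (V : Type*) [Fintype V] [DecidableEq V] [Nonempty V]
    (d : ℕ) (OH : OHG V) (hsym : OH.Symm) (f : V → EuclideanSpace ℝ (Fin d)) :
    0 ≤ ∑ u : V, (inner ℝ (f u) (lapF OH 0 f u) : ℝ) := by

  classical
  set D : Finset V × Finset V → EuclideanSpace ℝ (Fin d) :=
    fun e => xmean e.2 f - xmean e.1 f with hD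
  have key : ∑ u : V, (inner ℝ (f u) (lapF OH 0 f u) : ℝ)
      = -∑ e ∈ OH.E, OH.w e * inner ℝ (xmean e.1 f) (D e) := by
    have hlap : ∀ u : V, (inner ℝ (f u) (lapF OH 0 f u) : ℝ)
        = -∑ e ∈ Nin OH u, (OH.w e / (e.1.card : ℝ)) * inner ℝ (f u) (D e) := by
      intro u
      unfold lapF
      rw [real_inner_smul_right, inner_sum]
      simp only [pow_zero, inv_one, neg_one_mul, hD]
      congr 1
      exact Finset.sum_congr rfl fun e _ => real_inner_smul_right _ _ _
    have hswap : ∑ u : V, ∑ e ∈ Nin OH u, (OH.w e / (e.1.card : ℝ)) * inner ℝ (f u) (D e)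
        = ∑ e ∈ OH.E, ∑ u ∈ e.1, (OH.w e / (e.1.card : ℝ)) * (inner ℝ (f u) (D e) : ℝ) := by
      unfold Nin
      rw [Finset.sum_comm' (s := Finset.univ) (t := fun u => OH.E.filter (fun e => u ∈ e.1))
        (t' := OH.E) (s' := fun e => Finset.univ.filter (fun u => u ∈ e.1))]
      · apply Finset.sum_congr rfl
        intro e _
        apply Finset.sum_congr _ (fun _ _ => rfl)
        ext u; simp
      · intro u e; simp [and_comm]
    simp only [hlap]
    rw [Finset.sum_neg_distrib, hswap]
    rw [neg_inj]
    apply Finset.sum_congr rfl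
    intro e he
    have hc : (e.1.card : ℝ) ≠ 0 := by
      exact_mod_cast Finset.card_ne_zero_of_mem (OH.in_nonempty e he).choose_spec
    rw [← Finset.mul_sum, ← sum_inner]
    have hx : (xmean e.1 f : EuclideanSpace ℝ (Fin d)) = (e.1.card : ℝ)⁻¹ • ∑ u ∈ e.1, f u := rfl
    rw [hx, real_inner_smul_left]
    field_simp
  -- Step 2: flip via the symmetry involution
  have hflip : ∑ e ∈ OH.E, OH.w e * (inner ℝ (xmean e.1 f) (D e) : ℝ)
      = -∑ e ∈ OH.E, OH.w e * (inner ℝ (xmean e.2 f) (D e) : ℝ) := by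
    rw [← Finset.sum_neg_distrib]
    refine Finset.sum_nbij' (i := fun e => (e.2, e.1)) (j := fun e => (e.2, e.1)) ?_ ?_ ?_ ?_ ?_
    · intro e he; exact (hsym e he).1
    · intro e he; exact (hsym e he).1
    · intro e _; rfl
    · intro e _; rfl
    · intro e he
      have hw := (hsym e he).2
      have hDe : D (e.2, e.1) = -(D e) := by
        simp [hD]
      rw [hw, hDe, inner_neg_right]
      ring
  have hquad : (2 : ℝ) * ∑ u : V, (inner ℝ (f u) (lapF OH 0 f u) : ℝ)
      = ∑ e ∈ OH.E, OH.w e * ‖D e‖ ^ 2 := by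
    rw [key, hflip, neg_neg]
    have h2 : ∑ e ∈ OH.E, OH.w e * ‖D e‖ ^ 2
        = ∑ e ∈ OH.E, OH.w e * (inner ℝ (xmean e.2 f) (D e) : ℝ)
          - ∑ e ∈ OH.E, OH.w e * (inner ℝ (xmean e.1 f) (D e) : ℝ) := by
      rw [← Finset.sum_sub_distrib]
      apply Finset.sum_congr rfl
      intro e _
      have : (‖D e‖ : ℝ) ^ 2 = inner ℝ (D e) (D e) := by
        rw [real_inner_self_eq_norm_sq]
      rw [this, hD]
      simp only
      rw [← mul_sub, ← inner_sub_left]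
    rw [h2]
    linarith [hflip]
  have hnn : 0 ≤ ∑ e ∈ OH.E, OH.w e * ‖D e‖ ^ 2 :=
    Finset.sum_nonneg fun e he => mul_nonneg (OH.w_nonneg e he) (by positivity)
  linarith [hquad]
end

section
/- Let OH = (V, E, w) be a symmetric weighted oriented hypergraph and take η = 0. Then the Fréchet 2-Laplacian is self-adjoint with respect to the canonical vertex inner product: for all vertex functions f, g : V → ℝ^d, ⟨Δ_2^F f, g⟩^stnd = ⟨f, Δ_2^F g⟩^stnd. -/
open Finset

variable {V : Type*} [DecidableEq V] {d : ℕ}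

/-- the Fréchet 2-Laplacian (η = 0, symmetric hypergraph) is self-adjoint
w.r.t. the canonical vertex inner product. -/
theorem frechet_laplacian_self_adjoint (V : Type*) [Fintype V] [DecidableEq V] [Nonempty V]
    (d : ℕ) (OH : OHG V) (hsym : OH.Symm) (f g : V → EuclideanSpace ℝ (Fin d)) :
    ∑ u : V, (inner ℝ (lapF OH 0 f u) (g u) : ℝ) =
      ∑ u : V, (inner ℝ (f u) (lapF OH 0 g u) : ℝ) := by
  classical
  have key : ∀ (f g : V → EuclideanSpace ℝ (Fin d)),
      ∑ u : V, (inner ℝ (lapF OH 0 f u) (g u) : ℝ) =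
      -∑ e ∈ OH.E, OH.w e *
        (inner ℝ (xmean e.2 f - xmean e.1 f) (xmean e.1 g) : ℝ) := by
    intro f g
    have h1 : ∀ u : V, (inner ℝ (lapF OH 0 f u) (g u) : ℝ) =
        ∑ e ∈ OH.E, (if u ∈ e.1 then
          -((OH.w e / (e.1.card : ℝ)) *
            (inner ℝ (xmean e.2 f - xmean e.1 f) (g u) : ℝ)) else 0) := by
      intro u
      rw [lapF, Nin]
      simp only [pow_zero, inv_one, neg_smul, one_smul, inner_neg_left, sum_inner,
        real_inner_smul_left, Finset.sum_filter, neg_eq_iff_eq_neg, ← Finset.sum_neg_distrib]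
      congr 1; ext e; split <;> simp [Finset.mul_sum, mul_assoc, real_inner_smul_left]
    rw [Finset.sum_congr rfl (fun u _ => h1 u), Finset.sum_comm]
    rw [← Finset.sum_neg_distrib]
    refine Finset.sum_congr rfl (fun e he => ?_)
    have hcard : (e.1.card : ℝ) ≠ 0 := by
      exact_mod_cast Finset.card_ne_zero_of_mem (OH.in_nonempty e he).choose_spec
    have : ∑ u : V, (if u ∈ e.1 then
        -((OH.w e / (e.1.card : ℝ)) *
          (inner ℝ (xmean e.2 f - xmean e.1 f) (g u) : ℝ)) else 0)
        = ∑ u ∈ e.1, -((OH.w e / (e.1.card : ℝ)) *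
          (inner ℝ (xmean e.2 f - xmean e.1 f) (g u) : ℝ)) := by
      rw [Finset.sum_ite_mem, Finset.univ_inter]
    rw [this, Finset.sum_neg_distrib, neg_inj, ← Finset.mul_sum, ← inner_sum]
    rw [show (∑ u ∈ e.1, g u) = (e.1.card : ℝ) • xmean e.1 g by
      rw [xmean, smul_smul, mul_inv_cancel₀ hcard, one_smul]]
    rw [real_inner_smul_right]
    field_simp
  rw [key]
  have h2 : ∑ u : V, (inner ℝ (f u) (lapF OH 0 g u) : ℝ)
      = -∑ e ∈ OH.E, OH.w e *
        (inner ℝ (xmean e.2 g - xmean e.1 g) (xmean e.1 f) : ℝ) := by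
    rw [← key g f]
    exact Finset.sum_congr rfl fun u _ => real_inner_comm _ _
  rw [h2, neg_inj]
  simp only [inner_sub_left, mul_sub]
  rw [Finset.sum_sub_distrib, Finset.sum_sub_distrib]
  congr 1
  · refine Finset.sum_nbij' (fun e => (e.2, e.1)) (fun e => (e.2, e.1))
      (fun e he => (hsym e he).1) (fun e he => (hsym e he).1)
      (fun e _ => rfl) (fun e _ => rfl) (fun e he => ?_)
    rw [(hsym e he).2]
    exact congrArg _ (real_inner_comm _ _)
  · exact Finset.sum_congr rfl fun e _ => by rw [real_inner_comm]
end

section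
/- (Dirichlet principle / characterization of harmonic functions.) Let OH = (V, E, w) be a symmetric weighted oriented hypergraph and take η = 0. Then for every vertex function f : V → ℝ^d, the following are equivalent: (i) Δ_2^F f(u) = 0 for all u ∈ V; (ii) ∇^F f(e) = 0 for all e ∈ E. In particular, f minimizes the Dirichlet energy f ↦ ⟨∇^F f, ∇^F f⟩_F if and only if Δ_2^F f ≡ 0. -/
open Finset

variable {V : Type*} [DecidableEq V] {d : ℕ}

/-- Dirichlet principle — for a symmetric hypergraph (η = 0), the Fréchet
2-Laplacian of `f` vanishes everywhere iff the Fréchet gradient vanishes on every edge,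
i.e. iff `f` minimizes the Dirichlet energy. -/
theorem frechet_harmonic_iff_gradient_zero (V : Type*) [Fintype V] [DecidableEq V]
    [Nonempty V] (d : ℕ) (OH : OHG V) (hsym : OH.Symm)
    (f : V → EuclideanSpace ℝ (Fin d)) :
    (∀ u : V, lapF OH 0 f u = 0) ↔ (∀ e ∈ OH.E, gradF OH f e = 0) := by
  set g : Finset V × Finset V → EuclideanSpace ℝ (Fin d) :=
    fun e => xmean e.2 f - xmean e.1 f with hg
  constructor
  · intro hlap
    -- For each u, the sum over Nin u vanishes
    have hsum : ∀ u : V, ∑ e ∈ Nin OH u, (OH.w e / (e.1.card : ℝ)) • g e = 0 := by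
      intro u
      have := hlap u
      unfold lapF at this
      simp only [pow_zero, inv_one, neg_smul, one_smul, neg_eq_zero] at this
      exact this
    -- inner with f u, sum over all u, swap sums
    have hS : ∑ e ∈ OH.E, OH.w e * (inner ℝ (g e) (xmean e.1 f) : ℝ) = 0 := by
      have h1 : ∀ u : V, ∑ e ∈ Nin OH u,
          (OH.w e / (e.1.card : ℝ)) * (inner ℝ (g e) (f u) : ℝ) = 0 := by
        intro u
        have := congrArg (fun x : EuclideanSpace ℝ (Fin d) => (inner ℝ x (f u) : ℝ)) (hsum u)
        simp only [sum_inner, real_inner_smul_left, inner_zero_left] at this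
        exact this
      have h2 : ∑ u : V, ∑ e ∈ Nin OH u,
          (OH.w e / (e.1.card : ℝ)) * (inner ℝ (g e) (f u) : ℝ) = 0 :=
        Finset.sum_eq_zero (fun u _ => h1 u)
      rw [show (0:ℝ) = ∑ u : V, ∑ e ∈ Nin OH u,
          (OH.w e / (e.1.card : ℝ)) * (inner ℝ (g e) (f u) : ℝ) from h2.symm]
      unfold Nin
      rw [Finset.sum_comm' (s := Finset.univ) (t := fun u => OH.E.filter (fun e => u ∈ e.1))
        (t' := OH.E) (s' := fun e => e.1)
        (h := by intro u e; simp [Finset.mem_filter, and_comm])]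
      refine Finset.sum_congr rfl (fun e he => ?_)
      have hcard : (e.1.card : ℝ) ≠ 0 := by
        exact_mod_cast Finset.card_ne_zero_of_mem (OH.in_nonempty e he).choose_spec
      rw [← Finset.mul_sum]
      have : ∑ u ∈ e.1, (inner ℝ (g e) (f u) : ℝ) = (e.1.card : ℝ) * inner ℝ (g e) (xmean e.1 f) := by
        rw [xmean, real_inner_smul_right, ← inner_sum, ← mul_assoc,
          mul_inv_cancel₀ hcard, one_mul]
      rw [this]
      field_simp
    -- by symmetry, also with xmean e.2
    have hS2 : ∑ e ∈ OH.E, OH.w e * (inner ℝ (g e) (xmean e.2 f) : ℝ) = 0 := by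
      have hbij : ∑ e ∈ OH.E, OH.w e * (inner ℝ (g e) (xmean e.1 f) : ℝ)
          = ∑ e ∈ OH.E, OH.w (e.2, e.1) * (inner ℝ (g (e.2, e.1)) (xmean (e.2, e.1).1 f) : ℝ) := by
        refine Finset.sum_nbij' (i := fun e => (e.2, e.1)) (j := fun e => (e.2, e.1))
          (fun e he => (hsym e he).1) (fun e he => (hsym e he).1) ?_ ?_ ?_
        · intro e _; rfl
        · intro e _; rfl
        · intro e he
          rfl
      have : ∀ e ∈ OH.E, OH.w (e.2, e.1) * (inner ℝ (g (e.2, e.1)) (xmean (e.2, e.1).1 f) : ℝ)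
          = -(OH.w e * (inner ℝ (g e) (xmean e.2 f) : ℝ)) := by
        intro e he
        have hw := (hsym e he).2
        simp only [hg, hw]
        rw [show (xmean (e.2, e.1).2 f - xmean (e.2, e.1).1 f)
            = -(xmean e.2 f - xmean e.1 f) by simp [neg_sub]]
        rw [inner_neg_left]
        ring
      rw [hbij, Finset.sum_congr rfl this, Finset.sum_neg_distrib] at hS
      linarith [hS]
    -- Dirichlet energy vanishes
    have hE : ∑ e ∈ OH.E, OH.w e * ‖g e‖ ^ 2 = 0 := by
      have : ∀ e ∈ OH.E, OH.w e * ‖g e‖ ^ 2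
          = OH.w e * (inner ℝ (g e) (xmean e.2 f) : ℝ)
            - OH.w e * (inner ℝ (g e) (xmean e.1 f) : ℝ) := by
        intro e he
        rw [← mul_sub, ← inner_sub_right]
        have : (inner ℝ (g e) (xmean e.2 f - xmean e.1 f) : ℝ) = ‖g e‖ ^ 2 := by
          rw [hg]; exact real_inner_self_eq_norm_sq _
        rw [this]
      rw [Finset.sum_congr rfl this, Finset.sum_sub_distrib, hS, hS2, sub_zero]
    intro e he
    have hterm : OH.w e * ‖g e‖ ^ 2 = 0 := by
      have hnn : ∀ e ∈ OH.E, 0 ≤ OH.w e * ‖g e‖ ^ 2 := fun e he =>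
        mul_nonneg (OH.w_nonneg e he) (by positivity)
      exact (Finset.sum_eq_zero_iff_of_nonneg hnn).mp hE e he
    unfold gradF
    rcases mul_eq_zero.mp hterm with h | h
    · rw [show Real.sqrt (OH.w e) = 0 by rw [h, Real.sqrt_zero], zero_smul]
    · have : xmean e.2 f - xmean e.1 f = 0 := by
        have := pow_eq_zero_iff (n := 2) (by norm_num) |>.mp h
        simpa [hg] using norm_eq_zero.mp this
      rw [this, smul_zero]
  · intro hgrad u
    unfold lapF
    rw [Finset.sum_eq_zero, smul_zero]
    intro e he
    have heE : e ∈ OH.E := (Finset.mem_filter.mp he).1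
    have := hgrad e heE
    unfold gradF at this
    rcases smul_eq_zero.mp this with h | h
    · have hw0 : OH.w e = 0 :=
        le_antisymm (Real.sqrt_eq_zero'.mp h) (OH.w_nonneg e heE)
      rw [hw0]; simp
    · rw [h, smul_zero]
end
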